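/- Let A ∈ ℝ^{n×m} and B ∈ ℝ^{n×p}, let p ∈ [0,1]^n be a probability distribution with p_k > 0 for every k such that row k of A or B is nonzero, and let S ∈ ℝ^{s×n} be the row sampling and rescaling matrix built from s i.i.d. indices drawn from p. Then E[‖AᵀB − (S A)ᵀ S B‖_F²] = (1/s) Σ_{k=1}^n ‖A(k,:)‖₂² ‖B(k,:)‖₂² / p_k − (1/s) ‖AᵀB‖_F², and in particular E[‖AᵀB − (S A)ᵀ S B‖_F²] ≤ (1/s) Σ_{k=1}^n ‖A(k,:)‖₂² ‖B(k,:)‖₂² / p_k. -/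

import Mathlib

open Matrix MeasureTheory

/-- Squared Frobenius norm of a real matrix. -/
noncomputable def frobSq {m n : Type*} [Fintype m] [Fintype n] (M : Matrix m n ℝ) : ℝ :=
  ∑ i, ∑ j, (M i j) ^ 2

/-- Square of the smallest singular value of a matrix, as the infimum of
squared norms `‖M x‖₂²` over unit vectors `x`. -/
noncomputable def sigmaMinSq {m n : Type*} [Fintype m] [Fintype n] (M : Matrix m n ℝ) : ℝ :=
  sInf {c : ℝ | ∃ x : n → ℝ, ∑ i, (x i) ^ 2 = 1 ∧ c = ∑ j, (M.mulVec x j) ^ 2}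

/-- Square of the largest singular value of a matrix. -/
noncomputable def sigmaMaxSq {m n : Type*} [Fintype m] [Fintype n] (M : Matrix m n ℝ) : ℝ :=
  sSup {c : ℝ | ∃ x : n → ℝ, ∑ i, (x i) ^ 2 = 1 ∧ c = ∑ j, (M.mulVec x j) ^ 2}

/-- The weighted row-sampling ("RandSample") matrix determined by the sampled
indices `ξ : Fin s → Fin N` and the sampling probabilities `p`:
`S j i = 1/√(s pᵢ)` if `ξ j = i` and `0` otherwise. -/
noncomputable def randSampleMatrix {N : ℕ} (s : ℕ) (p : Fin N → ℝ) (ξ : Fin s → Fin N) :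
    Matrix (Fin s) (Fin N) ℝ :=
  fun j i => if ξ j = i then 1 / Real.sqrt (s * p i) else 0

/-- The measure on `Fin N` in which index `i` has probability `p i`. -/
noncomputable def sampleMeasure {N : ℕ} (p : Fin N → ℝ) : Measure (Fin N) :=
  ∑ i, ENNReal.ofReal (p i) • Measure.dirac i

/-- The law of `s` i.i.d. indices, each drawn from the distribution `p` on `Fin N`. -/
noncomputable def sampleMeasurePi {N : ℕ} (s : ℕ) (p : Fin N → ℝ) :
    Measure (Fin s → Fin N) :=
  Measure.pi fun _ => sampleMeasure p

/-!
Fix an entry `(i, j)` and put `X k = A k i * B k j / (s p_k)`. The `(i, j)` entry of `(SA)ᵀ SB`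
is `∑ₜ X (ξ t)`, a sum of `s` i.i.d. copies of `X` under `p`, and `E X = (AᵀB) i j / s` because
`p_k = 0` forces row `k` of `A` to vanish. Hence the expected squared error of that entry is the
variance of an i.i.d. sum, `s Var X = s E X² - (AᵀB)ᵢⱼ² / s`. Summing over all entries gives the
identity, and dropping the nonnegative `‖AᵀB‖_F² / s` gives the bound.
-/

open ProbabilityTheory

section SampleMeasure

variable {N : ℕ} {p : Fin N → ℝ}

lemma isProbabilityMeasure_sampleMeasure (hp0 : ∀ k, 0 ≤ p k) (hp1 : ∑ k, p k = 1) :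
    IsProbabilityMeasure (sampleMeasure p) := by
  constructor
  simp [sampleMeasure, ← ENNReal.ofReal_sum_of_nonneg fun k _ => hp0 k, hp1]

lemma integral_sampleMeasure (hp0 : ∀ k, 0 ≤ p k) (f : Fin N → ℝ) :
    ∫ k, f k ∂sampleMeasure p = ∑ k, p k * f k := by
  rw [sampleMeasure, integral_finsetSum_measure fun _ _ =>
    (integrable_dirac (by simp)).smul_measure ENNReal.ofReal_ne_top]
  simp [integral_smul_measure, hp0]

lemma isProbabilityMeasure_sampleMeasurePi (s : ℕ) (hp0 : ∀ k, 0 ≤ p k) (hp1 : ∑ k, p k = 1) :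
    IsProbabilityMeasure (sampleMeasurePi s p) :=
  have := isProbabilityMeasure_sampleMeasure hp0 hp1
  inferInstanceAs (IsProbabilityMeasure (Measure.pi _))

end SampleMeasure

lemma integral_sq_sum_pi_sub_card_mul_integral {Ω ι : Type*} [MeasurableSpace Ω] [Fintype ι]
    {μ : Measure Ω} [IsProbabilityMeasure μ] {X : Ω → ℝ} (hX : MemLp X 2 μ) :
    ∫ ω, (∑ i, X (ω i) - Fintype.card ι * μ[X]) ^ 2 ∂Measure.pi (fun _ : ι => μ)
      = Fintype.card ι * Var[X; μ] := by
  have hXi (i : ι) : MemLp (fun ω => X (ω i)) 2 (Measure.pi fun _ : ι => μ) :=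
    hX.comp_measurePreserving (measurePreserving_eval _ i)
  have hmean : ∫ ω, ∑ i, X (ω i) ∂Measure.pi (fun _ : ι => μ) = Fintype.card ι * μ[X] := by
    rw [integral_finsetSum _ fun i _ => (hXi i).integrable one_le_two]
    simp [integral_comp_eval (μ := fun _ : ι => μ) hX.aestronglyMeasurable]
  have hvar := variance_sum_pi (μ := fun _ : ι => μ) (X := fun _ => X) fun _ => hX
  rw [variance_eq_integral (memLp_finsetSum' _ fun i _ => hXi i).aemeasurable] at hvar
  simpa [hmean] using hvar

lemma integral_frobSq {Ω m n : Type*} [MeasurableSpace Ω] [Finite Ω] [MeasurableSingletonClass Ω]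
    [Fintype m] [Fintype n] (μ : Measure Ω) [IsFiniteMeasure μ] (M : Ω → Matrix m n ℝ) :
    ∫ ω, frobSq (M ω) ∂μ = ∑ i, ∑ j, ∫ ω, (M ω i j) ^ 2 ∂μ := by
  simp_rw [frobSq, integral_finsetSum _ fun _ _ => .of_finite]

lemma frobSq_nonneg {m n : Type*} [Fintype m] [Fintype n] (M : Matrix m n ℝ) : 0 ≤ frobSq M :=
  Finset.sum_nonneg fun _ _ => Finset.sum_nonneg fun _ _ => sq_nonneg _

lemma transpose_randSampleMatrix_mul_mul_apply {N s r l : ℕ} {p : Fin N → ℝ} (hp0 : ∀ k, 0 ≤ p k)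
    (ξ : Fin s → Fin N) (A : Matrix (Fin N) (Fin r) ℝ) (B : Matrix (Fin N) (Fin l) ℝ)
    (i : Fin r) (j : Fin l) :
    ((randSampleMatrix s p ξ * A)ᵀ * (randSampleMatrix s p ξ * B)) i j
      = ∑ t, A (ξ t) i * B (ξ t) j / (s * p (ξ t)) := by
  simp only [mul_apply, transpose_apply, randSampleMatrix, ite_mul, zero_mul, Finset.sum_ite_eq,
    Finset.mem_univ, if_true]
  refine Finset.sum_congr rfl fun t _ => ?_
  field_simp
  rw [Real.sq_sqrt (mul_nonneg (Nat.cast_nonneg s) (hp0 (ξ t)))]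

lemma integral_sq_sampling_error_apply {n m q s : ℕ} (hs : 0 < s)
    (A : Matrix (Fin n) (Fin m) ℝ) (B : Matrix (Fin n) (Fin q) ℝ)
    {p : Fin n → ℝ} (hp0 : ∀ k, 0 ≤ p k) (hp1 : ∑ k, p k = 1)
    (hpos : ∀ k, A k ≠ 0 → 0 < p k) (i : Fin m) (j : Fin q) :
    ∫ ξ, ((Aᵀ * B - (randSampleMatrix s p ξ * A)ᵀ * (randSampleMatrix s p ξ * B)) i j) ^ 2
        ∂sampleMeasurePi s p
      = (1 / s) * ∑ k, (A k i) ^ 2 * (B k j) ^ 2 / p k - (1 / s) * ((Aᵀ * B) i j) ^ 2 := by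
  have := isProbabilityMeasure_sampleMeasure hp0 hp1
  set X : Fin n → ℝ := fun k => A k i * B k j / (s * p k)
  have hmean : ∫ k, X k ∂sampleMeasure p = (Aᵀ * B) i j / s := by
    rw [integral_sampleMeasure hp0, mul_apply, Finset.sum_div]
    refine Finset.sum_congr rfl fun k _ => ?_
    rcases (hp0 k).eq_or_lt with hk | hk
    · have hA : A k = 0 := by_contra fun h => hk.not_lt (hpos k h)
      simp [X, hA, ← hk]
    · simp only [X, transpose_apply]
      field_simp
  have hsq : ∫ k, X k ^ 2 ∂sampleMeasure p
      = (1 / s ^ 2) * ∑ k, (A k i) ^ 2 * (B k j) ^ 2 / p k := by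
    rw [integral_sampleMeasure hp0, Finset.mul_sum]
    refine Finset.sum_congr rfl fun k _ => ?_
    rcases (hp0 k).eq_or_lt with hk | hk
    · simp [X, ← hk]
    · simp only [X]
      field_simp
  have herr (ξ : Fin s → Fin n) :
      (Aᵀ * B - (randSampleMatrix s p ξ * A)ᵀ * (randSampleMatrix s p ξ * B)) i j
        = -(∑ t, X (ξ t) - Fintype.card (Fin s) * ∫ k, X k ∂sampleMeasure p) := by
    rw [Matrix.sub_apply, transpose_randSampleMatrix_mul_mul_apply hp0, hmean, Fintype.card_fin]
    field_simp
    ring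
  simp_rw [herr, neg_sq]
  rw [sampleMeasurePi, integral_sq_sum_pi_sub_card_mul_integral .of_discrete,
    variance_eq_sub .of_discrete, Fintype.card_fin]
  simp only [Pi.pow_apply, hsq, hmean]
  field_simp

lemma integral_frobSq_sampling_error {n m q s : ℕ} (hs : 0 < s)
    (A : Matrix (Fin n) (Fin m) ℝ) (B : Matrix (Fin n) (Fin q) ℝ)
    {p : Fin n → ℝ} (hp0 : ∀ k, 0 ≤ p k) (hp1 : ∑ k, p k = 1)
    (hpos : ∀ k, A k ≠ 0 → 0 < p k) :
    ∫ ξ, frobSq (Aᵀ * B - (randSampleMatrix s p ξ * A)ᵀ * (randSampleMatrix s p ξ * B))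
        ∂sampleMeasurePi s p
      = (1 / s) * (∑ k, (∑ i, (A k i) ^ 2) * (∑ j, (B k j) ^ 2) / p k)
        - (1 / s) * frobSq (Aᵀ * B) := by
  have := isProbabilityMeasure_sampleMeasurePi s hp0 hp1
  simp_rw [integral_frobSq, integral_sq_sampling_error_apply hs A B hp0 hp1 hpos,
    Finset.sum_sub_distrib, ← Finset.mul_sum, frobSq]
  congr 2
  simp_rw [Finset.sum_mul_sum, Finset.sum_div]
  exact (Finset.sum_congr rfl fun _ _ => Finset.sum_comm).trans Finset.sum_comm

/-- expected squared Frobenius error of the randomized matrix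
product: exact expression and upper bound.
`E[‖AᵀB − (SA)ᵀ SB‖_F²] = (1/s) Σ_k ‖A(k,:)‖₂² ‖B(k,:)‖₂² / p_k − (1/s) ‖AᵀB‖_F²`,
and in particular `E[‖AᵀB − (SA)ᵀ SB‖_F²] ≤ (1/s) Σ_k ‖A(k,:)‖₂² ‖B(k,:)‖₂² / p_k`. -/
theorem randomized_matmul_expected_error {n m q s : ℕ} (hs : 0 < s)
    (A : Matrix (Fin n) (Fin m) ℝ) (B : Matrix (Fin n) (Fin q) ℝ)
    (p : Fin n → ℝ) (hp0 : ∀ k, 0 ≤ p k) (hp1 : ∑ k, p k = 1)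
    (hpos : ∀ k, (A k ≠ 0 ∨ B k ≠ 0) → 0 < p k) :
    (∫ ξ, frobSq (Aᵀ * B -
          (randSampleMatrix s p ξ * A)ᵀ * (randSampleMatrix s p ξ * B))
        ∂(sampleMeasurePi s p)
      = (1 / s) * (∑ k, (∑ i, (A k i) ^ 2) * (∑ j, (B k j) ^ 2) / p k)
        - (1 / s) * frobSq (Aᵀ * B))
    ∧ ∫ ξ, frobSq (Aᵀ * B -
          (randSampleMatrix s p ξ * A)ᵀ * (randSampleMatrix s p ξ * B))
        ∂(sampleMeasurePi s p)
      ≤ (1 / s) * (∑ k, (∑ i, (A k i) ^ 2) * (∑ j, (B k j) ^ 2) / p k) := by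
  have heq := integral_frobSq_sampling_error hs A B hp0 hp1 fun k hA => hpos k (.inl hA)
  exact ⟨heq, heq ▸ sub_le_self _ (mul_nonneg (by positivity) (frobSq_nonneg _))⟩
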